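/- Let A_n denote the sum, over all Motzkin paths of length n, of the amplitude of the path. In the formal power series ring ℚ[[v]], where 1 + v + v² is invertible, the family (A_n · v^n · (1 + v + v²)^{−n})_{n≥0} is summable and v² · ∑_{n≥0} A_n · (v·(1 + v + v²)^{−1})^n = (1 + v + v²)·(1 − v²)·∑_{h≥1} ∑_{k≥1} v^{h·k} − v·(1 + 2v)·(1 + v + v²), where ∑_{h,k≥1} v^{hk} = ∑_{m≥1} d(m) v^m with d(m) the number of divisors of m. -/

import Mathlib

open Finset
open scoped Classical

/-- A step: `+1`, `-1` or `0`. -/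
abbrev Step : Type := ({1, -1, 0} : Finset ℤ)

/-- Partial sum of the first `k` steps. -/
def psum {n : ℕ} (w : Fin n → Step) (k : ℕ) : ℤ :=
  ∑ i : Fin n, if (i : ℕ) < k then (w i : ℤ) else 0

/-- `w` is a Motzkin path: all partial sums are nonnegative and the total sum is `0`. -/
def IsMotzkin {n : ℕ} (w : Fin n → Step) : Prop :=
  (∀ k ∈ Finset.range (n + 1), 0 ≤ psum w k) ∧ psum w n = 0

/-- The height of a path: the maximum of its partial sums (`0` for the empty path). -/
def height {n : ℕ} (w : Fin n → Step) : ℤ :=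
  (Finset.range (n + 1)).sup' (Finset.nonempty_range_iff.mpr (Nat.succ_ne_zero n)) (psum w)

/-- `w` has a horizontal step at level `j`: some step is `0` and the partial sum up to
and including that step equals `j`. -/
def HasHorizAt {n : ℕ} (w : Fin n → Step) (j : ℤ) : Prop :=
  ∃ i : Fin n, (w i : ℤ) = 0 ∧ psum w ((i : ℕ) + 1) = j

/-- The amplitude of a path of height `h` is `2h + 1` if the path has a horizontal step
at level `h`, and `2h` otherwise. -/
noncomputable def amplitude {n : ℕ} (w : Fin n → Step) : ℤ :=
  if HasHorizAt w (height w) then 2 * height w + 1 else 2 * height w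

/-- `A n` is the sum of the amplitudes of all Motzkin paths of length `n`. -/
noncomputable def A (n : ℕ) : ℤ :=
  ∑ w ∈ Finset.univ.filter fun w : Fin n → Step => IsMotzkin w, amplitude w

/-- A family of formal power series is (formally) summable if for every degree `m`
only finitely many members of the family have a nonzero coefficient of `v^m`. -/
def PSSummable (F : ℕ → PowerSeries ℚ) : Prop :=
  ∀ m : ℕ, {n : ℕ | PowerSeries.coeff m (F n) ≠ 0}.Finite

/-- The (formal) sum of a family of power series, computed coefficientwise. -/
noncomputable def PSSum (F : ℕ → PowerSeries ℚ) : PowerSeries ℚ :=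
  PowerSeries.mk fun m => ∑ᶠ n : ℕ, PowerSeries.coeff m (F n)

/-!
A Motzkin path has amplitude at most `a` exactly when every level `e` it reaches satisfies
`2e ≤ a` and every horizontal step at level `e` satisfies `2e + 1 ≤ a`; so the amplitude is the
width of the narrowest strip containing the path. Paths in the strip `a` are counted by a
tridiagonal transfer system, and after the substitution `x = v/(1+v+v²)` the system can be solved
from the top level down: the generating function of strip paths from `0` to `0` becomes
`(1+v+v²)(1-v^{a+1})/(1-v^{a+3})`. Writing the amplitude as `∑_b [b < amplitude]`, the amplitude
generating function is `(1+v+v²)(1-v²) ∑_{a ≥ 0} v^{a+1}/(1-v^{a+3})`, and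
`∑_{d ≥ 3} v^d/(1-v^d)` is the divisor series minus `v/(1-v) + v²/(1-v²)`.
-/

lemma sum_step {M : Type*} [AddCommMonoid M] (f : ℤ → M) :
    ∑ s : Step, f s = f 1 + f (-1) + f 0 := by
  rw [Finset.sum_coe_sort {1, -1, 0} f, Finset.sum_insert (by decide),
    Finset.sum_insert (by decide), Finset.sum_singleton, add_assoc]

section Paths

variable {n : ℕ}

@[simp]
lemma psum_zero (w : Fin n → Step) : psum w 0 = 0 := by
  simp [psum]

lemma psum_of_le (w : Fin n → Step) {k : ℕ} (hk : n ≤ k) : psum w k = psum w n :=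
  Finset.sum_congr rfl fun i _ => by rw [if_pos (by omega), if_pos i.2]

lemma psum_snoc (w : Fin n → Step) (s : Step) (k : ℕ) :
    psum (Fin.snoc w s : Fin (n + 1) → Step) k = psum w k + if n < k then (s : ℤ) else 0 := by
  simp [psum, Fin.sum_univ_castSucc]

lemma psum_le (w : Fin n → Step) (k : ℕ) : psum w k ≤ n := by
  have hstep (i : Fin n) : (if (i : ℕ) < k then (w i : ℤ) else 0) ≤ 1 := by
    have := (w i).2
    simp only [Finset.mem_insert, Finset.mem_singleton] at this
    split_ifs <;> omega
  calc psum w k ≤ ∑ _i : Fin n, (1 : ℤ) := Finset.sum_le_sum fun i _ => hstep i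
    _ = n := by simp

end Paths

def StepInStrip (a : ℕ) (e s : ℤ) : Prop :=
  0 ≤ e ∧ 2 * e ≤ a ∧ (s = 0 → 2 * e + 1 ≤ a)

def PathInStrip (a : ℕ) {n : ℕ} (w : Fin n → Step) : Prop :=
  ∀ i : Fin n, StepInStrip a (psum w (i + 1)) (w i)

lemma sum_stepInStrip {M : Type*} [AddCommMonoid M] (a : ℕ) (j : ℤ) (f : ℤ → M) :
    (∑ s : Step, if StepInStrip a j s then f (j - s) else 0) =
      if 0 ≤ j ∧ 2 * j ≤ a then f (j - 1) + f (j + 1) + if 2 * j + 1 ≤ a then f j else 0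
      else 0 := by
  rw [sum_step (fun s => if StepInStrip a j s then f (j - s) else 0)]
  by_cases hj : 0 ≤ j ∧ 2 * j ≤ a
  · simp [StepInStrip, hj]
  · simp [StepInStrip, hj]
    omega

section Strip

variable {a n : ℕ}

lemma PathInStrip.psum_bounds {w : Fin n → Step} (h : PathInStrip a w) {k : ℕ} (hk : k ≤ n) :
    0 ≤ psum w k ∧ 2 * psum w k ≤ a := by
  rcases k with _ | k
  · simp
  · exact ⟨(h ⟨k, hk⟩).1, (h ⟨k, hk⟩).2.1⟩

lemma pathInStrip_snoc_iff (w : Fin n → Step) (s : Step) :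
    PathInStrip a (Fin.snoc w s : Fin (n + 1) → Step) ↔
      PathInStrip a w ∧ StepInStrip a (psum w n + s) s := by
  unfold PathInStrip
  rw [Fin.forall_fin_succ']
  have hlow (i : Fin n) : ¬ n ≤ (i : ℕ) := by omega
  simp [psum_snoc, hlow, psum_of_le w (Nat.le_succ n)]

lemma amplitude_le_iff_pathInStrip {w : Fin n → Step} (hw : IsMotzkin w) :
    amplitude w ≤ a ↔ PathInStrip a w := by
  obtain ⟨k, hk, hheight⟩ : ∃ k ∈ Finset.range (n + 1), height w = psum w k :=
    Finset.exists_mem_eq_sup' _ (psum w)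
  have hle (k : ℕ) (hk : k ≤ n) : psum w k ≤ height w :=
    Finset.le_sup' (psum w) (Finset.mem_range.mpr (Nat.lt_succ_of_le hk))
  have hnonneg (i : Fin n) : 0 ≤ psum w (i + 1) := hw.1 _ (by simp)
  unfold amplitude
  constructor
  · intro hamp i
    refine ⟨hnonneg i, ?_, fun hi => ?_⟩
    · have := hle (i + 1) i.2
      split_ifs at hamp <;> omega
    · rcases (hle (i + 1) i.2).lt_or_eq with hlt | heq
      · split_ifs at hamp <;> omega
      · rw [if_pos ⟨i, hi, heq⟩] at hamp
        omega
  · intro hstrip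
    have htop : 2 * height w ≤ a := by
      rw [hheight]
      exact (hstrip.psum_bounds (Nat.lt_succ_iff.mp (Finset.mem_range.mp hk))).2
    split_ifs with hhoriz
    · obtain ⟨i, hi, heq⟩ := hhoriz
      have := (hstrip i).2.2 hi
      omega
    · exact htop

lemma isMotzkin_and_amplitude_le_iff (w : Fin n → Step) :
    IsMotzkin w ∧ amplitude w ≤ a ↔ PathInStrip a w ∧ psum w n = 0 := by
  constructor
  · rintro ⟨hw, hamp⟩
    exact ⟨(amplitude_le_iff_pathInStrip hw).mp hamp, hw.2⟩
  · rintro ⟨hstrip, hend⟩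
    have hw : IsMotzkin w :=
      ⟨fun k hk => (hstrip.psum_bounds (Nat.lt_succ_iff.mp (Finset.mem_range.mp hk))).1, hend⟩
    exact ⟨hw, (amplitude_le_iff_pathInStrip hw).mpr hstrip⟩

end Strip

noncomputable def stripCount (a n : ℕ) (j : ℤ) : ℕ :=
  #{w : Fin n → Step | PathInStrip a w ∧ psum w n = j}

lemma stripCount_zero (a : ℕ) (j : ℤ) : stripCount a 0 j = if j = 0 then 1 else 0 := by
  by_cases hj : j = 0 <;> simp [stripCount, PathInStrip, psum, hj, eq_comm]

lemma stripCount_succ (a n : ℕ) (j : ℤ) :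
    stripCount a (n + 1) j =
      ∑ s : Step, if StepInStrip a j s then stripCount a n (j - s) else 0 := by
  have hsnoc (s : Step) (w : Fin n → Step) :
      (PathInStrip a (Fin.snoc w s : Fin (n + 1) → Step) ∧
          psum (Fin.snoc w s : Fin (n + 1) → Step) (n + 1) = j) ↔
        StepInStrip a j s ∧ (PathInStrip a w ∧ psum w n = j - s) := by
    rw [pathInStrip_snoc_iff, psum_snoc, if_pos n.lt_succ_self, psum_of_le w n.le_succ]
    constructor
    · rintro ⟨⟨hw, hs⟩, rfl⟩
      exact ⟨hs, hw, by ring⟩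
    · rintro ⟨hs, hw, hj⟩
      rw [hj, sub_add_cancel]
      exact ⟨⟨hw, hs⟩, rfl⟩
  have hsplit (f : (Fin (n + 1) → Step) → ℕ) :
      ∑ v, f v = ∑ s : Step, ∑ w : Fin n → Step, f (Fin.snoc w s) := by
    rw [← (Fin.snocEquiv fun _ => Step).sum_comp, Fintype.sum_prod_type]
    rfl
  rw [stripCount, Finset.card_filter, hsplit]
  refine Finset.sum_congr rfl fun s _ => ?_
  simp only [hsnoc]
  simp only [ite_and, Finset.sum_ite_irrel, Finset.sum_const_zero, stripCount, Finset.card_filter]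


lemma card_motzkin_amplitude_le (a n : ℕ) :
    #{w : Fin n → Step | IsMotzkin w ∧ amplitude w ≤ a} = stripCount a n 0 :=
  congrArg Finset.card (Finset.filter_congr fun w _ => isMotzkin_and_amplitude_le_iff w)

lemma amplitude_nonneg {n : ℕ} (w : Fin n → Step) : 0 ≤ amplitude w := by
  have : psum w 0 ≤ height w := Finset.le_sup' (psum w) (Finset.mem_range.mpr n.succ_pos)
  rw [psum_zero] at this
  unfold amplitude
  split_ifs <;> omega

lemma amplitude_le {n : ℕ} (w : Fin n → Step) : amplitude w ≤ 2 * n + 1 := by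
  have : height w ≤ n := Finset.sup'_le _ _ fun k _ => psum_le w k
  unfold amplitude
  split_ifs <;> omega

lemma A_eq_sum_stripCount {n B : ℕ} (hB : 2 * n + 1 ≤ B) :
    A n = ∑ b ∈ Finset.range B, ((stripCount B n 0 : ℤ) - stripCount b n 0) := by
  have hamp (w : Fin n → Step) :
      amplitude w = ∑ b ∈ Finset.range B, if (b : ℤ) < amplitude w then 1 else 0 := by
    obtain ⟨t, ht⟩ := Int.eq_ofNat_of_zero_le (amplitude_nonneg w)
    have htB : t ≤ B := by have := amplitude_le w; omega
    have hfilter : (Finset.range B).filter (fun b : ℕ => (b : ℤ) < t) = Finset.range t := by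
      ext b
      simp only [Finset.mem_filter, Finset.mem_range]
      omega
    rw [Finset.sum_boole, ht, hfilter, Finset.card_range]
  have hcount (b : ℕ) :
      ∑ w ∈ Finset.univ.filter fun w : Fin n → Step => IsMotzkin w,
          (if (b : ℤ) < amplitude w then 1 else 0) =
        (stripCount B n 0 : ℤ) - stripCount b n 0 := by
    have hall : (Finset.univ.filter fun w : Fin n → Step => IsMotzkin w ∧ amplitude w ≤ B) =
        Finset.univ.filter fun w => IsMotzkin w :=
      Finset.filter_congr fun w _ => and_iff_left ((amplitude_le w).trans (by omega))
    have hsplit := Finset.card_filter_add_card_filter_not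
      (s := Finset.univ.filter fun w : Fin n → Step => IsMotzkin w)
      (p := fun w => (b : ℤ) < amplitude w)
    simp only [Finset.filter_filter, not_lt] at hsplit
    rw [Finset.sum_boole, ← card_motzkin_amplitude_le, ← card_motzkin_amplitude_le, hall,
      ← hsplit, Finset.filter_filter]
    omega
  rw [A, Finset.sum_congr rfl fun w _ => hamp w, Finset.sum_comm]
  exact Finset.sum_congr rfl fun b _ => hcount b

theorem one_sub_pow_mul_eq_of_strip_recurrence {R : Type*} [CommRing R] {x y : R}
    (hy : (1 + x + x ^ 2) * y = x) (a : ℕ) (S : ℤ → R)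
    (hS : ∀ j, S j = (if j = 0 then 1 else 0) + y * if 0 ≤ j ∧ 2 * j ≤ a then
      S (j - 1) + S (j + 1) + (if 2 * j + 1 ≤ a then S j else 0) else 0) :
    (1 - x ^ (a + 3)) * S 0 = (1 + x + x ^ 2) * (1 - x ^ (a + 1)) := by
  have hout (j : ℤ) (hj : ¬(0 ≤ j ∧ 2 * j ≤ a)) : S j = 0 := by
    rw [hS j, if_neg hj, if_neg (by omega), mul_zero, add_zero]
  have hin (j : ℕ) (hj : 2 * j ≤ a) : (1 + x + x ^ 2) * S j =
      (1 + x + x ^ 2) * (if (j : ℤ) = 0 then 1 else 0) +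
        x * (S (j - 1) + S (j + 1) + if 2 * (j : ℤ) + 1 ≤ a then S j else 0) := by
    have hlegal : 0 ≤ (j : ℤ) ∧ 2 * (j : ℤ) ≤ a := ⟨by positivity, by exact_mod_cast hj⟩
    conv_lhs => rw [hS j, if_pos hlegal]
    linear_combination (S (j - 1) + S (j + 1) + if 2 * (j : ℤ) + 1 ≤ a then S j else 0) * hy
  -- `r = a - 2j` is the distance to the top of the strip: descend from the top level.
  have key (r : ℕ) : ∀ j : ℕ, a = 2 * j + r → (1 - x ^ (r + 3)) * S j =
      (1 - x ^ (r + 1)) * ((1 + x + x ^ 2) * (if (j : ℤ) = 0 then 1 else 0) + x * S (j - 1)) := by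
    induction r using Nat.strong_induction_on with
    | _ r ih =>
      intro j ha
      have hj := hin j (by omega)
      match r with
      | 0 =>
        rw [hout (j + 1) (by omega), if_neg (show ¬(2 * (j : ℤ) + 1 ≤ a) by omega)] at hj
        linear_combination (1 - x) * hj
      | 1 =>
        rw [hout (j + 1) (by omega), if_pos (show 2 * (j : ℤ) + 1 ≤ a by omega)] at hj
        linear_combination (1 - x ^ 2) * hj
      | r + 2 =>
        have hnext := ih r (by omega) (j + 1) (by omega)
        push_cast at hnext
        rw [if_neg (by omega), add_sub_cancel_right] at hnext
        rw [if_pos (show 2 * (j : ℤ) + 1 ≤ a by omega)] at hj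
        linear_combination (1 - x ^ (r + 3)) * hj + x * hnext
  have h0 := key a 0 (by ring)
  rw [Nat.cast_zero, if_pos rfl, hout (0 - 1) (by omega)] at h0
  linear_combination h0

namespace PowerSeries

variable {R : Type*} [CommRing R]

lemma eq_of_forall_X_pow_dvd_sub {f g : R⟦X⟧} (h : ∀ N, (X : R⟦X⟧) ^ N ∣ f - g) :
    f = g := by
  ext n
  have := X_pow_dvd_iff.mp (h (n + 1)) n n.lt_succ_self
  rwa [map_sub, sub_eq_zero] at this

lemma X_pow_dvd_subst {y f : R⟦X⟧} (hy : X ∣ y) {N : ℕ} (hf : (X : R⟦X⟧) ^ N ∣ f) :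
    (X : R⟦X⟧) ^ N ∣ f.subst y := by
  obtain ⟨g, rfl⟩ := hf
  have hs : HasSubst y := HasSubst.of_constantCoeff_zero' (X_dvd_iff.mp hy)
  rw [subst_mul hs, subst_pow hs, subst_X hs]
  exact dvd_mul_of_dvd_left (pow_dvd_pow_of_dvd hy N) _

variable (R) in
noncomputable def lambertTerm (d : ℕ) : R⟦X⟧ :=
  PowerSeries.mk fun m => if m ≠ 0 ∧ d ∣ m then 1 else 0

@[simp]
lemma lambertTerm_zero : lambertTerm R 0 = 0 := by
  ext
  simp [lambertTerm]

lemma one_sub_X_pow_mul_lambertTerm {d : ℕ} (hd : d ≠ 0) :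
    (1 - X ^ d) * lambertTerm R d = X ^ d := by
  ext m
  rw [sub_mul, one_mul, map_sub, coeff_X_pow_mul', coeff_X_pow]
  simp only [lambertTerm, coeff_mk]
  by_cases hdm : d ≤ m
  · obtain ⟨k, rfl⟩ := Nat.exists_eq_add_of_le hdm
    rcases eq_or_ne k 0 with rfl | hk
    · simp [hd]
    · simp [hd, hk, Nat.dvd_add_right (dvd_refl d)]
  · have : ¬ (m ≠ 0 ∧ d ∣ m) := fun h => hdm (Nat.le_of_dvd (Nat.pos_of_ne_zero h.1) h.2)
    simp [hdm, this]
    omega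

lemma X_pow_dvd_divisorsGF_sub_sum_lambertTerm (M : ℕ) :
    (X : R⟦X⟧) ^ M ∣
      (PowerSeries.mk fun m => if m = 0 then (0 : R) else (m.divisors.card : R)) -
      ∑ d ∈ Finset.range M, lambertTerm R d := by
  refine X_pow_dvd_iff.mpr fun m hm => ?_
  rw [map_sub, map_sum, coeff_mk, sub_eq_zero]
  simp only [lambertTerm, coeff_mk]
  rcases eq_or_ne m 0 with rfl | hm0
  · simp
  · have : (Finset.range M).filter (· ∣ m) = m.divisors := by
      ext d
      simp only [Finset.mem_filter, Finset.mem_range, Nat.mem_divisors]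
      exact ⟨fun h => ⟨h.2, hm0⟩,
        fun h => ⟨(Nat.le_of_dvd (Nat.pos_of_ne_zero hm0) h.1).trans_lt hm, h.1⟩⟩
    simp [hm0, Finset.sum_boole, this]

end PowerSeries

open PowerSeries

lemma pssummable_C_mul_pow {b : ℚ⟦X⟧} (hb : HasSubst b) (f : ℕ → ℚ) :
    PSSummable fun n => C (f n) * b ^ n := fun m => by
  simpa [coeff_C_mul, Function.HasFiniteSupport, Function.support] using
    coeff_subst_finite' hb (PowerSeries.mk f) m

lemma pssum_C_mul_pow {b : ℚ⟦X⟧} (hb : HasSubst b) (f : ℕ → ℚ) :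
    PSSum (fun n => C (f n) * b ^ n) = (PowerSeries.mk f).subst b := by
  ext m
  simp [PSSum, coeff_subst' hb, coeff_C_mul]

noncomputable def stripGF (a : ℕ) (j : ℤ) : ℚ⟦X⟧ :=
  PowerSeries.mk fun n => (stripCount a n j : ℚ)

lemma stripGF_eq (a : ℕ) (j : ℤ) :
    stripGF a j = (if j = 0 then 1 else 0) + X * if 0 ≤ j ∧ 2 * j ≤ a then
      stripGF a (j - 1) + stripGF a (j + 1) + (if 2 * j + 1 ≤ a then stripGF a j else 0)
      else 0 := by
  rw [← sum_stepInStrip]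
  ext n
  rcases n with _ | n
  · by_cases hj : j = 0 <;> simp [stripGF, stripCount_zero, hj]
  · by_cases hj : j = 0 <;>
      simp [stripGF, stripCount_succ, coeff_succ_X_mul, map_sum, apply_ite (coeff n), hj]

section Substitution

variable {y : ℚ⟦X⟧}

lemma X_dvd_of_mul_eq_X (hy : (1 + X + X ^ 2) * y = X) : X ∣ y :=
  X_dvd_iff.mpr (by simpa using congrArg constantCoeff hy)

lemma hasSubst_of_mul_eq_X (hy : (1 + X + X ^ 2) * y = X) : HasSubst y :=
  HasSubst.of_constantCoeff_zero' (X_dvd_iff.mp (X_dvd_of_mul_eq_X hy))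

lemma one_sub_X_pow_mul_subst_stripGF (hy : (1 + X + X ^ 2) * y = X) (a : ℕ) :
    (1 - X ^ (a + 3)) * (stripGF a 0).subst y = (1 + X + X ^ 2) * (1 - X ^ (a + 1)) := by
  refine one_sub_pow_mul_eq_of_strip_recurrence hy a (fun j => (stripGF a j).subst y) fun j => ?_
  conv_lhs => rw [stripGF_eq, ← coe_substAlgHom (hasSubst_of_mul_eq_X hy)]
  simp only [map_add, map_mul, map_one, map_zero, apply_ite (substAlgHom _), substAlgHom_X]
  simp only [coe_substAlgHom]

lemma X_pow_dvd_subst_stripGF_sub (hy : (1 + X + X ^ 2) * y = X) (a : ℕ) :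
    X ^ (a + 1) ∣ (stripGF a 0).subst y - (1 + X + X ^ 2) :=
  ⟨X ^ 2 * (stripGF a 0).subst y - (1 + X + X ^ 2), by
    linear_combination one_sub_X_pow_mul_subst_stripGF hy a⟩

lemma X_sq_mul_sub_subst_stripGF (hy : (1 + X + X ^ 2) * y = X) (a : ℕ) :
    X ^ 2 * ((1 + X + X ^ 2) - (stripGF a 0).subst y) =
      (1 + X + X ^ 2) * (1 - X ^ 2) * lambertTerm ℚ (a + 3) := by
  have hunit : (1 - X ^ (a + 3) : ℚ⟦X⟧) ≠ 0 := fun h => by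
    simpa using congrArg constantCoeff h
  refine mul_left_cancel₀ hunit ?_
  linear_combination (-X ^ 2) * one_sub_X_pow_mul_subst_stripGF hy a -
    (1 + X + X ^ 2) * (1 - X ^ 2) * one_sub_X_pow_mul_lambertTerm (R := ℚ) (d := a + 3) (by omega)

lemma X_pow_dvd_subst_A_sub (hy : (1 + X + X ^ 2) * y = X) (N : ℕ) :
    X ^ N ∣ (PowerSeries.mk fun n => (A n : ℚ)).subst y -
      ∑ b ∈ Finset.range (2 * N), ((1 + X + X ^ 2) - (stripGF b 0).subst y) := by
  have hs := hasSubst_of_mul_eq_X hy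
  have hA : X ^ N ∣ (PowerSeries.mk fun n => (A n : ℚ)) -
      ∑ b ∈ Finset.range (2 * N), (stripGF (2 * N) 0 - stripGF b 0) := by
    refine X_pow_dvd_iff.mpr fun n hn => ?_
    rw [map_sub, map_sum, coeff_mk, A_eq_sum_stripCount (B := 2 * N) (by omega), sub_eq_zero]
    simp [stripGF]
  have hsubst := X_pow_dvd_subst (X_dvd_of_mul_eq_X hy) hA
  rw [← coe_substAlgHom hs, map_sub, map_sum] at hsubst
  simp only [map_sub, coe_substAlgHom] at hsubst
  have hsat := (pow_dvd_pow X (by omega : N ≤ 2 * N + 1)).trans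
    (X_pow_dvd_subst_stripGF_sub hy (2 * N))
  have hsplit : (PowerSeries.mk fun n => (A n : ℚ)).subst y -
      ∑ b ∈ Finset.range (2 * N), ((1 + X + X ^ 2) - (stripGF b 0).subst y) =
      ((PowerSeries.mk fun n => (A n : ℚ)).subst y -
        ∑ b ∈ Finset.range (2 * N), ((stripGF (2 * N) 0).subst y - (stripGF b 0).subst y)) +
      (2 * N : ℚ⟦X⟧) * ((stripGF (2 * N) 0).subst y - (1 + X + X ^ 2)) := by
    simp only [Finset.sum_sub_distrib, Finset.sum_const, Finset.card_range, nsmul_eq_mul]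
    push_cast
    ring
  rw [hsplit]
  exact dvd_add hsubst (dvd_mul_of_dvd_right hsat _)

lemma X_sq_mul_subst_mk_A (hy : (1 + X + X ^ 2) * y = X) :
    X ^ 2 * (PowerSeries.mk fun n => (A n : ℚ)).subst y =
      (1 + X + X ^ 2) * (1 - X ^ 2) *
          (PowerSeries.mk fun m => if m = 0 then (0 : ℚ) else (m.divisors.card : ℚ)) -
        X * (1 + 2 * X) * (1 + X + X ^ 2) := by
  refine eq_of_forall_X_pow_dvd_sub fun N => ?_
  have hA := X_pow_dvd_subst_A_sub hy N
  have hD := (pow_dvd_pow X (by omega : N ≤ 2 * N + 3)).trans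
    (X_pow_dvd_divisorsGF_sub_sum_lambertTerm (R := ℚ) (2 * N + 3))
  have hterms : X ^ 2 * ∑ b ∈ Finset.range (2 * N), ((1 + X + X ^ 2) - (stripGF b 0).subst y) =
      (1 + X + X ^ 2) * (1 - X ^ 2) * ∑ b ∈ Finset.range (2 * N), lambertTerm ℚ (b + 3) := by
    simp only [Finset.mul_sum, X_sq_mul_sub_subst_stripGF hy]
  have hsplit : ∑ d ∈ Finset.range (2 * N + 3), lambertTerm ℚ d =
      lambertTerm ℚ 1 + lambertTerm ℚ 2 +
        ∑ b ∈ Finset.range (2 * N), lambertTerm ℚ (b + 3) := by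
    rw [add_comm (2 * N), Finset.sum_range_add]
    simp [Finset.sum_range_succ, add_comm]
  have hL1 := one_sub_X_pow_mul_lambertTerm (R := ℚ) one_ne_zero
  have hL2 := one_sub_X_pow_mul_lambertTerm (R := ℚ) two_ne_zero
  rw [hsplit] at hD
  convert dvd_sub (dvd_mul_of_dvd_right hA (X ^ 2))
    (dvd_mul_of_dvd_right hD ((1 + X + X ^ 2) * (1 - X ^ 2))) using 1
  linear_combination hterms - (1 + X + X ^ 2) * (1 + X) * hL1 - (1 + X + X ^ 2) * hL2

end Substitution

open PowerSeries in
/-- In `ℚ[[v]]`: the family `(A n · (v (1+v+v²)⁻¹)^n)` is formally summable and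
`v² ∑_{n≥0} A n (v (1+v+v²)⁻¹)^n
  = (1+v+v²)(1-v²) ∑_{h,k ≥ 1} v^{hk} - v(1+2v)(1+v+v²)`,
where `∑_{h,k≥1} v^{hk} = ∑_{m≥1} d(m) v^m` with `d(m)` the number of divisors of `m`. -/
theorem amplitude_genfun :
    PSSummable (fun n => C ((A n : ℚ)) * (X * (1 + X + X ^ 2 : PowerSeries ℚ)⁻¹) ^ n) ∧
    (X : PowerSeries ℚ) ^ 2 *
        PSSum (fun n => C ((A n : ℚ)) * (X * (1 + X + X ^ 2 : PowerSeries ℚ)⁻¹) ^ n)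
      = (1 + X + X ^ 2) * (1 - X ^ 2) *
          (PowerSeries.mk fun m => if m = 0 then (0 : ℚ) else (m.divisors.card : ℚ))
        - X * (1 + 2 * X) * (1 + X + X ^ 2) := by
  have hy : (1 + X + X ^ 2) * (X * (1 + X + X ^ 2 : ℚ⟦X⟧)⁻¹) = X := by
    rw [mul_left_comm, PowerSeries.mul_inv_cancel _ (by simp), mul_one]
  have hs := hasSubst_of_mul_eq_X hy
  exact ⟨pssummable_C_mul_pow hs _, by rw [pssum_C_mul_pow hs]; exact X_sq_mul_subst_mk_A hy⟩
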